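/- arXiv:2012.01705 — 3 statements merged into one kernel-verified Lean document; each statement's English description precedes it below -/
import Mathlib

section
/- Let N ≥ 1 and let L_1, …, L_T ∈ ℝ^N be loss vectors. For λ > 0 define q_t ∈ ℝ^N by (q_t)_i = exp(−(1/λ)·Σ_{s=1}^t (L_s)_i) / Σ_{j=1}^N exp(−(1/λ)·Σ_{s=1}^t (L_s)_j). If ‖L_{t+1}‖_∞ ≤ 1 then ‖q_{t+1} − q_t‖_1 ≤ 2·(e^{2/λ} − 1). In particular, for λ ≥ 2 one has ‖q_{t+1} − q_t‖_1 ≤ 2(e−1)·(2/λ) ≤ 8/λ. -/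
/-!
Passing from `q t` to `q (t + 1)` multiplies every unnormalised weight by `exp (-L (t + 1) i / lam)`,
a factor in `[exp (-1 / lam), exp (1 / lam)]`. The normaliser moves by a factor in the same range, so
each coordinate of the distribution changes by a factor in `[exp (-2 / lam), exp (2 / lam)]`, i.e. by
at most `(exp (2 / lam) - 1) * q t i`; summing over `i` gives the `ℓ¹` bound. For `lam ≥ 2`,
convexity of `exp` on `[0, 1]` gives `exp (2 / lam) - 1 ≤ (e - 1) * (2 / lam)`.
-/

open Real Finset

theorem abs_sub_le_of_exp_neg_mul_le_of_le_exp_mul {x p p' : ℝ} (hp : 0 ≤ p)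
    (hlow : exp (-x) * p ≤ p') (hup : p' ≤ exp x * p) : |p' - p| ≤ (exp x - 1) * p := by
  have hgap : 1 - exp (-x) ≤ exp x - 1 := by
    have hprod : exp x * exp (-x) = 1 := by rw [← exp_add, add_neg_cancel, exp_zero]
    nlinarith [sq_nonneg (exp x - 1), exp_pos x, exp_pos (-x)]
  rw [abs_le]
  constructor <;> nlinarith

theorem exp_le_one_add_mul_of_mem_Icc {x : ℝ} (h0 : 0 ≤ x) (h1 : x ≤ 1) :
    exp x ≤ 1 + (exp 1 - 1) * x := by
  have := convexOn_exp.2 (Set.mem_univ 0) (Set.mem_univ 1) (by linarith : 0 ≤ 1 - x) h0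
    (by ring)
  simp only [smul_eq_mul, mul_zero, mul_one, zero_add, exp_zero] at this
  linarith

section Normalize

variable {ι : Type*} [Fintype ι] {a b : ι → ℝ} {c : ℝ}

theorem div_sum_le_exp_two_mul_div_sum (ha : ∀ i, 0 < a i)
    (hlow : ∀ i, exp (-c) * a i ≤ b i) (hup : ∀ i, b i ≤ exp c * a i) (i : ι) :
    b i / ∑ j, b j ≤ exp (2 * c) * (a i / ∑ j, a j) := by
  have hA : 0 < ∑ j, a j := sum_pos (fun j _ => ha j) ⟨i, mem_univ i⟩
  have hB : exp (-c) * ∑ j, a j ≤ ∑ j, b j := by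
    rw [mul_sum]
    exact sum_le_sum fun j _ => hlow j
  calc b i / ∑ j, b j ≤ exp c * a i / ∑ j, b j :=
        div_le_div_of_nonneg_right (hup i) ((mul_pos (exp_pos _) hA).le.trans hB)
    _ ≤ exp c * a i / (exp (-c) * ∑ j, a j) :=
        div_le_div_of_nonneg_left (mul_pos (exp_pos _) (ha i)).le (mul_pos (exp_pos _) hA) hB
    _ = exp (2 * c) * (a i / ∑ j, a j) := by
        rw [show 2 * c = c - -c by ring, exp_sub]
        ring

theorem sum_abs_div_sum_sub_div_sum_le (hc : 0 ≤ c) (ha : ∀ i, 0 < a i)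
    (hlow : ∀ i, exp (-c) * a i ≤ b i) (hup : ∀ i, b i ≤ exp c * a i) :
    ∑ i, |b i / ∑ j, b j - a i / ∑ j, a j| ≤ exp (2 * c) - 1 := by
  have hb : ∀ i, 0 < b i := fun i => (mul_pos (exp_pos _) (ha i)).trans_le (hlow i)
  -- the lower bound is the upper bound with the roles of `a` and `b` exchanged
  have hlow' : ∀ i, exp (-(2 * c)) * (a i / ∑ j, a j) ≤ b i / ∑ j, b j := by
    intro i
    rw [exp_neg, inv_mul_le_iff₀ (exp_pos _)]
    refine div_sum_le_exp_two_mul_div_sum hb (fun j => ?_) (fun j => ?_) i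
    · rw [exp_neg, inv_mul_le_iff₀ (exp_pos _)]
      exact hup j
    · have := hlow j
      rwa [exp_neg, inv_mul_le_iff₀ (exp_pos _)] at this
  have hexp : 0 ≤ exp (2 * c) - 1 := by
    linarith [one_le_exp (by linarith : 0 ≤ 2 * c)]
  calc ∑ i, |b i / ∑ j, b j - a i / ∑ j, a j|
      ≤ ∑ i, (exp (2 * c) - 1) * (a i / ∑ j, a j) :=
        sum_le_sum fun i _ => abs_sub_le_of_exp_neg_mul_le_of_le_exp_mul
          (div_nonneg (ha i).le (sum_nonneg fun j _ => (ha j).le)) (hlow' i)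
          (div_sum_le_exp_two_mul_div_sum ha hlow hup i)
    _ = (exp (2 * c) - 1) * ((∑ i, a i) / ∑ j, a j) := by rw [← mul_sum, sum_div]
    _ ≤ exp (2 * c) - 1 := mul_le_of_le_one_right hexp (div_self_le_one _)

end Normalize

theorem stmt11_general (N : ℕ) (lam : ℝ) (hlam : 0 < lam) (L : ℕ → Fin N → ℝ)
    (q : ℕ → Fin N → ℝ)
    (hq : ∀ t i, q t i =
      Real.exp (-(1 / lam) * ∑ s ∈ Finset.Icc 1 t, L s i) /
        ∑ j, Real.exp (-(1 / lam) * ∑ s ∈ Finset.Icc 1 t, L s j))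
    (t : ℕ) (hL : ∀ i, |L (t + 1) i| ≤ 1) :
    (∑ i, |q (t + 1) i - q t i| ≤ 2 * (Real.exp (2 / lam) - 1)) ∧
    (2 ≤ lam →
      (∑ i, |q (t + 1) i - q t i| ≤ 2 * (Real.exp 1 - 1) * (2 / lam)) ∧
        2 * (Real.exp 1 - 1) * (2 / lam) ≤ 8 / lam) := by
  set a : Fin N → ℝ := fun i => exp (-(1 / lam) * ∑ s ∈ Icc 1 t, L s i)
  have hstep : ∀ i, exp (-(1 / lam) * ∑ s ∈ Icc 1 (t + 1), L s i)
      = exp (-(1 / lam) * L (t + 1) i) * a i := by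
    intro i
    rw [sum_Icc_succ_top (by omega), ← exp_add]
    ring_nf
  have hstable : ∑ i, |q (t + 1) i - q t i| ≤ exp (2 / lam) - 1 := by
    have hfactor := sum_abs_div_sum_sub_div_sum_le (c := 1 / lam) (a := a)
      (b := fun i => exp (-(1 / lam) * L (t + 1) i) * a i) (by positivity)
      (fun i => exp_pos _) (fun i => ?_) (fun i => ?_)
    · simp only [hq, hstep]
      rwa [show 2 * (1 / lam) = 2 / lam by ring] at hfactor
    all_goals
      gcongr
      have := abs_le.1 (hL i)
      nlinarith [show 0 < 1 / lam by positivity]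
  have hexp : 0 ≤ exp (2 / lam) - 1 := by
    linarith [one_le_exp (by positivity : 0 ≤ 2 / lam)]
  refine ⟨by linarith, fun hlam2 => ⟨?_, ?_⟩⟩
  · have hchord := exp_le_one_add_mul_of_mem_Icc (x := 2 / lam) (by positivity)
      ((div_le_one hlam).2 hlam2)
    have he : 0 ≤ (exp 1 - 1) * (2 / lam) := mul_nonneg (by linarith [one_le_exp zero_le_one])
      (by positivity)
    linarith
  · rw [show 8 / lam = 2 * 2 * (2 / lam) by ring]
    gcongr
    linarith [exp_one_lt_three]

theorem stmt11 (N : ℕ) (hN : 1 ≤ N) (lam : ℝ) (hlam : 0 < lam) (L : ℕ → Fin N → ℝ)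
    (q : ℕ → Fin N → ℝ)
    (hq : ∀ t i, q t i =
      Real.exp (-(1 / lam) * ∑ s ∈ Finset.Icc 1 t, L s i) /
        ∑ j, Real.exp (-(1 / lam) * ∑ s ∈ Finset.Icc 1 t, L s j))
    (t : ℕ) (hL : ∀ i, |L (t + 1) i| ≤ 1) :
    (∑ i, |q (t + 1) i - q t i| ≤ 2 * (Real.exp (2 / lam) - 1)) ∧
    (2 ≤ lam →
      (∑ i, |q (t + 1) i - q t i| ≤ 2 * (Real.exp 1 - 1) * (2 / lam)) ∧
        2 * (Real.exp 1 - 1) * (2 / lam) ≤ 8 / lam) :=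
  stmt11_general N lam hlam L q hq t hL
end

section
/- Let T ≥ 1 and L ≥ 1 with L ≤ T. Then inf over β ∈ [1, L] of ((β − 1)·T/L + √(L·T)/√(β + 1)) is at least √(L·T)/√2 whenever L ≤ (32T)^{1/3}, and at least 2^{1/3}·T^{2/3} whenever L > (32T)^{1/3}. -/
/-!
At `β = 1` the objective equals `√(LT)/√2`, and it is convex in `β`. When `L³ ≤ 32T` its slope
at `β = 1` is nonnegative, so `β = 1` is optimal. Otherwise write the objective as `a + b - 2T/L`
with `a = (β+1)T/L`, `b = √(LT)/√(β+1)`; since `a b² = T²`, AM-GM on `a, b/2, b/2` gives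
`a + b ≥ 3 (T²/4)^{1/3}`, while `L³ > 32T` gives `2T/L < (T²/4)^{1/3}`.
-/

open Real

lemma le_rpow_one_div_three_iff {x y : ℝ} (hx : 0 ≤ x) (hy : 0 ≤ y) :
    x ≤ y ^ ((1 : ℝ) / 3) ↔ x ^ 3 ≤ y := by
  rw [one_div, le_rpow_inv_iff_of_pos hx hy (by norm_num), ← rpow_natCast]
  norm_num

lemma rpow_one_div_three_lt_iff {x y : ℝ} (hx : 0 ≤ x) (hy : 0 ≤ y) :
    x ^ ((1 : ℝ) / 3) < y ↔ x < y ^ 3 := by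
  rw [one_div, rpow_inv_lt_iff_of_pos hx hy (by norm_num), ← rpow_natCast]
  norm_num

lemma two_rpow_one_third_mul_rpow_two_thirds_pow_three {T : ℝ} (hT : 0 ≤ T) :
    (2 ^ ((1 : ℝ) / 3) * T ^ ((2 : ℝ) / 3)) ^ 3 = 2 * T ^ 2 := by
  rw [mul_pow, ← rpow_natCast, ← rpow_natCast (T ^ _), ← rpow_mul (by norm_num), ← rpow_mul hT]
  norm_num

/-- AM-GM for `a`, `b/2`, `b/2`. -/
lemma three_mul_le_add_of_mul_sq_eq {a b m : ℝ} (ha : 0 ≤ a) (hb : 0 ≤ b)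
    (habm : a * b ^ 2 = 4 * m ^ 3) : 3 * m ≤ a + b := by
  have hcube : (3 * m) ^ 3 ≤ (a + b) ^ 3 := by
    have hfactor : (a + b) ^ 3 - 27 / 4 * (a * b ^ 2) = (b - 2 * a) ^ 2 * (a + 4 * b) / 4 := by ring
    nlinarith [mul_nonneg (sq_nonneg (b - 2 * a)) (by positivity : 0 ≤ a + 4 * b)]
  exact le_of_pow_le_pow_left₀ three_ne_zero (by positivity) hcube

lemma sqrt_mul_div_sqrt_two_le_of_pow_three_le {T L β : ℝ} (hT : 0 < T) (hL : 0 < L)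
    (hβ : 1 ≤ β) (hLT : L ^ 3 ≤ 32 * T) :
    √(L * T) / √2 ≤ (β - 1) * T / L + √(L * T) / √(β + 1) := by
  set q := √(L * T)
  set r := √2
  set s := √(β + 1)
  have hq : q ^ 2 = L * T := sq_sqrt (by positivity)
  have hr : r ^ 2 = 2 := sq_sqrt (by norm_num)
  have hs : s ^ 2 = β + 1 := sq_sqrt (by linarith)
  have hr0 : 0 < r := by positivity
  have hrs : r ≤ s := sqrt_le_sqrt (by linarith)
  have hqL : q * L ≤ 4 * r * T := by
    refine le_of_pow_le_pow_left₀ two_ne_zero (by positivity) ?_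
    rw [mul_pow, mul_pow, mul_pow, hq, hr]
    nlinarith
  -- `4 r = 2 r³ ≤ r s (s + r)`
  have hqL' : q * L ≤ r * s * (s + r) * T := by
    have : 4 * r ≤ r * s * (s + r) := by nlinarith [mul_le_mul_of_nonneg_left hrs hr0.le]
    nlinarith
  have hdiff : q / r - q / s ≤ (β - 1) * T / L := by
    rw [div_sub_div _ _ hr0.ne' (by positivity), div_le_div_iff₀ (by positivity) hL,
      show β - 1 = (s - r) * (s + r) by nlinarith]
    nlinarith [mul_le_mul_of_nonneg_left hqL' (sub_nonneg.mpr hrs)]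
  linarith

lemma two_mul_le_of_le_pow_three {T L β m : ℝ} (hT : 0 < T) (hL : 0 < L) (hβ : -1 < β)
    (hm : 0 ≤ m) (hmT : 4 * m ^ 3 = T ^ 2) (hLT : 32 * T ≤ L ^ 3) :
    2 * m ≤ (β - 1) * T / L + √(L * T) / √(β + 1) := by
  have hβ' : 0 < β + 1 := by linarith
  set a := (β + 1) * T / L
  set b := √(L * T) / √(β + 1)
  have hab : a * b ^ 2 = 4 * m ^ 3 := by
    rw [hmT, div_pow, sq_sqrt (by positivity), sq_sqrt hβ'.le]
    simp only [a]
    field_simp [hβ'.ne']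
  have hsum : 3 * m ≤ a + b :=
    three_mul_le_add_of_mul_sq_eq (div_nonneg (mul_nonneg hβ'.le hT.le) hL.le) (by positivity) hab
  have hTL : 2 * T / L ≤ m := by
    refine le_of_pow_le_pow_left₀ three_ne_zero hm ?_
    rw [div_pow, div_le_iff₀ (pow_pos hL 3)]
    nlinarith [mul_le_mul_of_nonneg_left hLT (sq_nonneg T)]
  have hsplit : (β - 1) * T / L = a - 2 * T / L := by ring
  linarith

theorem stmt16_general (T L : ℝ) (hT : 1 ≤ T) :
    (L ≤ (32 * T) ^ ((1 : ℝ) / 3) → ∀ β ∈ Set.Icc (1 : ℝ) L,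
      Real.sqrt (L * T) / Real.sqrt 2 ≤ (β - 1) * T / L + Real.sqrt (L * T) / Real.sqrt (β + 1)) ∧
    ((32 * T) ^ ((1 : ℝ) / 3) < L → ∀ β ∈ Set.Icc (1 : ℝ) L,
      2 ^ ((1 : ℝ) / 3) * T ^ ((2 : ℝ) / 3) ≤
        (β - 1) * T / L + Real.sqrt (L * T) / Real.sqrt (β + 1)) := by
  have hT0 : 0 < T := by linarith
  constructor
  · rintro hsmall β ⟨hβ1, hβL⟩
    have hL0 : 0 < L := by linarith
    exact sqrt_mul_div_sqrt_two_le_of_pow_three_le hT0 hL0 hβ1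
      ((le_rpow_one_div_three_iff hL0.le (by positivity)).1 hsmall)
  · rintro hlarge β ⟨hβ1, hβL⟩
    have hL0 : 0 < L := by linarith
    have hcube := two_rpow_one_third_mul_rpow_two_thirds_pow_three hT0.le
    have hbound := two_mul_le_of_le_pow_three (β := β)
      (m := 2 ^ ((1 : ℝ) / 3) * T ^ ((2 : ℝ) / 3) / 2) hT0 hL0 (by linarith) (by positivity)
      (by rw [div_pow, hcube]; ring) ((rpow_one_div_three_lt_iff (by positivity) hL0.le).1 hlarge).le
    linarith

theorem stmt16 (T L : ℝ) (hT : 1 ≤ T) (hL : 1 ≤ L) (hLT : L ≤ T) :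
    (L ≤ (32 * T) ^ ((1 : ℝ) / 3) → ∀ β ∈ Set.Icc (1 : ℝ) L,
      Real.sqrt (L * T) / Real.sqrt 2 ≤ (β - 1) * T / L + Real.sqrt (L * T) / Real.sqrt (β + 1)) ∧
    ((32 * T) ^ ((1 : ℝ) / 3) < L → ∀ β ∈ Set.Icc (1 : ℝ) L,
      2 ^ ((1 : ℝ) / 3) * T ^ ((2 : ℝ) / 3) ≤
        (β - 1) * T / L + Real.sqrt (L * T) / Real.sqrt (β + 1)) :=
  stmt16_general T L hT
end

section
/- Let M_1, M_2 be square matrices with ‖M_i‖ ≤ 1 − γ for γ ∈ (0,1), and let W be a matrix with ‖W‖ ≤ ε. Suppose X_1 and X_2 are (the unique) solutions of X_i = M_i X_i M_i^⊤ + C for a fixed matrix C with ‖X_i‖ ≤ R, where M_2 = M_1 + E with ‖E‖ ≤ δ. Then ‖X_1 − X_2‖ ≤ 2·(1−γ)·R·δ / (1 − (1−γ)²) ≤ R·δ/γ · 2. -/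
/-
Subtracting the two fixed-point equations and writing `M₂ = M₁ + E` gives
`X₁ - X₂ = M₁ (X₁ - X₂) M₁* - (E X₂ M₂* + M₁ X₂ E*)`, so `d = ‖X₁ - X₂‖` satisfies the
contraction inequality `d ≤ q² d + 2 q R δ` with `q = 1 - γ`, whence `d ≤ 2 q R δ / (1 - q²)`.
-/

section LyapunovPerturbation

variable {A : Type*} [NonUnitalRing A] [StarRing A]

theorem lyapunov_sub_eq {M₁ M₂ E C X₁ X₂ : A}
    (hX₁ : X₁ = M₁ * (X₁ * star M₁) + C) (hX₂ : X₂ = M₂ * (X₂ * star M₂) + C)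
    (hE : M₂ = M₁ + E) :
    X₁ - X₂ = M₁ * ((X₁ - X₂) * star M₁) - (E * (X₂ * star M₂) + M₁ * (X₂ * star E)) := by
  conv_lhs => rw [hX₁, hX₂]
  rw [hE, star_add]
  noncomm_ring

end LyapunovPerturbation

section NormBounds

variable {A : Type*} [NonUnitalNormedRing A] [StarRing A] [NormedStarGroup A]

theorem norm_mul_mul_star_le {M X N : A} {a r b : ℝ} (hM : ‖M‖ ≤ a) (hX : ‖X‖ ≤ r)
    (hN : ‖N‖ ≤ b) : ‖M * (X * star N)‖ ≤ a * (r * b) := by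
  calc ‖M * (X * star N)‖ ≤ ‖M‖ * (‖X‖ * ‖N‖) := by
        grw [norm_mul_le, norm_mul_le, norm_star]
    _ ≤ a * (r * b) := by
        gcongr
        · exact (norm_nonneg _).trans hM
        · exact (norm_nonneg _).trans hX

theorem norm_lyapunov_sub_le_sq_mul_add {M₁ M₂ E C X₁ X₂ : A} {q R δ : ℝ}
    (hX₁ : X₁ = M₁ * (X₁ * star M₁) + C) (hX₂ : X₂ = M₂ * (X₂ * star M₂) + C)
    (hE : M₂ = M₁ + E) (hM₁ : ‖M₁‖ ≤ q) (hM₂ : ‖M₂‖ ≤ q) (hEδ : ‖E‖ ≤ δ) (hXR : ‖X₂‖ ≤ R) :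
    ‖X₁ - X₂‖ ≤ q ^ 2 * ‖X₁ - X₂‖ + 2 * q * R * δ := by
  calc ‖X₁ - X₂‖
      = ‖M₁ * ((X₁ - X₂) * star M₁) - (E * (X₂ * star M₂) + M₁ * (X₂ * star E))‖ := by
        rw [← lyapunov_sub_eq hX₁ hX₂ hE]
    _ ≤ ‖M₁ * ((X₁ - X₂) * star M₁)‖ + (‖E * (X₂ * star M₂)‖ + ‖M₁ * (X₂ * star E)‖) := by
        grw [norm_sub_le, norm_add_le]
    _ ≤ q * (‖X₁ - X₂‖ * q) + (δ * (R * q) + q * (R * δ)) := by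
        grw [norm_mul_mul_star_le hM₁ le_rfl hM₁, norm_mul_mul_star_le hEδ hXR hM₂,
          norm_mul_mul_star_le hM₁ hXR hEδ]
    _ = q ^ 2 * ‖X₁ - X₂‖ + 2 * q * R * δ := by ring

theorem norm_lyapunov_sub_le {M₁ M₂ E C X₁ X₂ : A} {q R δ : ℝ} (hq : q ^ 2 < 1)
    (hX₁ : X₁ = M₁ * (X₁ * star M₁) + C) (hX₂ : X₂ = M₂ * (X₂ * star M₂) + C)
    (hE : M₂ = M₁ + E) (hM₁ : ‖M₁‖ ≤ q) (hM₂ : ‖M₂‖ ≤ q) (hEδ : ‖E‖ ≤ δ) (hXR : ‖X₂‖ ≤ R) :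
    ‖X₁ - X₂‖ ≤ 2 * q * R * δ / (1 - q ^ 2) := by
  rw [le_div_iff₀ (by linarith)]
  linarith [norm_lyapunov_sub_le_sq_mul_add hX₁ hX₂ hE hM₁ hM₂ hEδ hXR]

end NormBounds

theorem two_mul_one_sub_mul_div_one_sub_sq_le {γ c : ℝ} (hγ : γ ∈ Set.Ioo (0 : ℝ) 1)
    (hc : 0 ≤ c) : 2 * (1 - γ) * c / (1 - (1 - γ) ^ 2) ≤ 2 * (c / γ) := by
  obtain ⟨hγ₀, hγ₁⟩ := hγ
  rw [show (1 : ℝ) - (1 - γ) ^ 2 = γ * (2 - γ) by ring, ← mul_div_assoc,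
    div_le_div_iff₀ (by nlinarith) hγ₀]
  nlinarith [mul_nonneg hc hγ₀.le]

theorem stmt19_general {n : ℕ} (γ δ R : ℝ) (hγ : γ ∈ Set.Ioo (0 : ℝ) 1)
    (M₁ M₂ Eop C X₁ X₂ : EuclideanSpace ℝ (Fin n) →L[ℝ] EuclideanSpace ℝ (Fin n))
    (hM1 : ‖M₁‖ ≤ 1 - γ) (hM2 : ‖M₂‖ ≤ 1 - γ)
    (hX1 : X₁ = M₁ ∘L X₁ ∘L ContinuousLinearMap.adjoint M₁ + C)
    (hX2 : X₂ = M₂ ∘L X₂ ∘L ContinuousLinearMap.adjoint M₂ + C)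
    (hXR2 : ‖X₂‖ ≤ R)
    (hE : M₂ = M₁ + Eop) (hEδ : ‖Eop‖ ≤ δ) :
    ‖X₁ - X₂‖ ≤ 2 * (1 - γ) * R * δ / (1 - (1 - γ) ^ 2) ∧
      2 * (1 - γ) * R * δ / (1 - (1 - γ) ^ 2) ≤ 2 * (R * δ / γ) := by
  have hRδ : 0 ≤ R * δ :=
    mul_nonneg ((norm_nonneg _).trans hXR2) ((norm_nonneg _).trans hEδ)
  rw [← ContinuousLinearMap.star_eq_adjoint] at hX1 hX2
  refine ⟨norm_lyapunov_sub_le (by nlinarith [hγ.1, hγ.2]) hX1 hX2 hE hM1 hM2 hEδ hXR2, ?_⟩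
  rw [mul_assoc _ R]
  exact two_mul_one_sub_mul_div_one_sub_sq_le hγ hRδ

theorem stmt19 {n : ℕ} (γ δ R ε : ℝ) (hγ : γ ∈ Set.Ioo (0 : ℝ) 1) (hδ : 0 ≤ δ) (hR : 0 ≤ R)
    (M₁ M₂ Eop W C X₁ X₂ : EuclideanSpace ℝ (Fin n) →L[ℝ] EuclideanSpace ℝ (Fin n))
    (hM1 : ‖M₁‖ ≤ 1 - γ) (hM2 : ‖M₂‖ ≤ 1 - γ) (hW : ‖W‖ ≤ ε)
    (hX1 : X₁ = M₁ ∘L X₁ ∘L ContinuousLinearMap.adjoint M₁ + C)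
    (hX2 : X₂ = M₂ ∘L X₂ ∘L ContinuousLinearMap.adjoint M₂ + C)
    (hXR1 : ‖X₁‖ ≤ R) (hXR2 : ‖X₂‖ ≤ R)
    (hE : M₂ = M₁ + Eop) (hEδ : ‖Eop‖ ≤ δ) :
    ‖X₁ - X₂‖ ≤ 2 * (1 - γ) * R * δ / (1 - (1 - γ) ^ 2) ∧
      2 * (1 - γ) * R * δ / (1 - (1 - γ) ^ 2) ≤ 2 * (R * δ / γ) :=
  stmt19_general γ δ R hγ M₁ M₂ Eop C X₁ X₂ hM1 hM2 hX1 hX2 hXR2 hE hEδ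
end
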